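/- Let Φ denote the standard normal cdf and consider, for k, σ > 0, the equation ρ/(2k) − 1/2 + Φ(−ρ/σ) = 0 in ρ. Then: (i) if k/σ > √(π/2), there exists a unique solution ρ* = ρ*(k,σ) in the interval (0, k); (ii) on the region {(k,σ) : k/σ > √(π/2)}, ρ*(k,σ) is strictly decreasing in σ for fixed k, and ρ*(k,σ) → k as σ → 0⁺; (iii) ρ*(k,σ) is strictly increasing in k for fixed σ. -/

import Mathlib

/-!
Since `Φ(-x) = 1 - Φ(x)`, the equation says that `(Φ(ρ/σ) - 1/2)/ρ = 1/(2k)`. The left side,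
`chordPhi σ ρ`, is `1/σ` times the slope of the chord of `Φ` from `0` to `ρ/σ`. As `Φ` is strictly
concave on `[0, ∞)`, it is strictly decreasing in `ρ`; as `Φ` is increasing, it is strictly
decreasing in `σ`. For `ρ → 0⁺` it tends to `Φ'(0)/σ = 1/(σ√(2π))`, which exceeds `1/(2k)` exactly
when `k/σ > √(π/2)`, and at `ρ = k` it is below `1/(2k)` because `Φ < 1`; the intermediate value
theorem and strict monotonicity give (i), and comparing chord slopes gives the monotonicity in `σ`
and `k`. As `σ → 0⁺` the chord slope of `Φ` at `ρ*/σ` equals `σ/(2k) → 0`, which forces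
`ρ*/σ → ∞`, hence `ρ* = 2k(Φ(ρ*/σ) - 1/2) → k`.
-/

open Set

noncomputable section

/-- The standard normal cumulative distribution function `Φ`. -/
def Phi (x : ℝ) : ℝ :=
  ∫ t in Set.Iic x, Real.exp (-(t ^ 2) / 2) / Real.sqrt (2 * Real.pi)

open MeasureTheory ProbabilityTheory Filter Topology

lemma gaussianPDFReal_zero_one (x : ℝ) :
    gaussianPDFReal 0 1 x = Real.exp (-(x ^ 2) / 2) / Real.sqrt (2 * Real.pi) := by
  simp [gaussianPDFReal, div_eq_inv_mul]

lemma gaussianPDFReal_zero_one_zero : gaussianPDFReal 0 1 0 = 1 / (2 * √(Real.pi / 2)) := by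
  have h : √(2 * Real.pi) = 2 * √(Real.pi / 2) := by
    rw [show 2 * Real.pi = 2 ^ 2 * (Real.pi / 2) by ring, Real.sqrt_mul (by positivity),
      Real.sqrt_sq zero_le_two]
  simp [gaussianPDFReal_zero_one, h]

lemma continuous_gaussianPDFReal (μ : ℝ) (v : NNReal) : Continuous (gaussianPDFReal μ v) := by
  rw [gaussianPDFReal_def]; fun_prop

lemma strictAntiOn_gaussianPDFReal (μ : ℝ) {v : NNReal} (hv : v ≠ 0) :
    StrictAntiOn (gaussianPDFReal μ v) (Ici μ) := by
  intro x hx y _ hxy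
  rw [gaussianPDFReal, gaussianPDFReal]
  gcongr
  exact sub_nonneg.2 hx

lemma Phi_eq_integral (x : ℝ) : Phi x = ∫ t in Iic x, gaussianPDFReal 0 1 t := by
  simp only [Phi, gaussianPDFReal_zero_one]

lemma Phi_eq_cdf (x : ℝ) : Phi x = cdf (gaussianReal 0 1) x := by
  rw [cdf_eq_real, measureReal_def, gaussianReal_apply_eq_integral _ one_ne_zero,
    ENNReal.toReal_ofReal (setIntegral_nonneg measurableSet_Iic
      fun t _ ↦ gaussianPDFReal_nonneg 0 1 t), Phi_eq_integral]

lemma tendsto_Phi_atTop : Tendsto Phi atTop (𝓝 1) := by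
  simpa only [← funext Phi_eq_cdf] using tendsto_cdf_atTop (gaussianReal 0 1)

lemma hasDerivAt_Phi (x : ℝ) : HasDerivAt Phi (gaussianPDFReal 0 1 x) x := by
  have hint := integrable_gaussianPDFReal 0 1
  have h : Phi = fun y ↦ Phi 0 + ∫ t in (0 : ℝ)..y, gaussianPDFReal 0 1 t := by
    funext y
    rw [Phi_eq_integral, Phi_eq_integral, ← intervalIntegral.integral_Iic_sub_Iic hint.integrableOn
      hint.integrableOn]
    ring
  rw [h]
  exact ((continuous_gaussianPDFReal 0 1).integral_hasStrictDerivAt 0 x).hasDerivAt.const_add _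

lemma continuous_Phi : Continuous Phi :=
  continuous_iff_continuousAt.2 fun x ↦ (hasDerivAt_Phi x).continuousAt

lemma strictMono_Phi : StrictMono Phi :=
  strictMono_of_hasDerivAt_pos hasDerivAt_Phi fun x ↦ gaussianPDFReal_pos 0 1 x one_ne_zero

lemma Phi_lt_one (x : ℝ) : Phi x < 1 :=
  (strictMono_Phi (lt_add_one x)).trans_le
    (strictMono_Phi.monotone.ge_of_tendsto tendsto_Phi_atTop _)

lemma Phi_neg (x : ℝ) : Phi (-x) = 1 - Phi x := by
  have hint := integrable_gaussianPDFReal 0 1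
  have heven (t : ℝ) : gaussianPDFReal 0 1 (-t) = gaussianPDFReal 0 1 t := by
    simp [gaussianPDFReal]
  rw [eq_sub_iff_add_eq, Phi_eq_integral, Phi_eq_integral, ← integral_comp_neg_Ioi]
  simp only [heven]
  rw [add_comm, intervalIntegral.integral_Iic_add_Ioi hint.integrableOn hint.integrableOn,
    integral_gaussianPDFReal_eq_one 0 one_ne_zero]

lemma Phi_zero : Phi 0 = 1 / 2 := by
  have h := Phi_neg 0
  rw [neg_zero] at h
  linarith

lemma strictConcaveOn_Phi : StrictConcaveOn ℝ (Ici 0) Phi := by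
  refine StrictAntiOn.strictConcaveOn_of_deriv (convex_Ici 0) continuous_Phi.continuousOn ?_
  rw [funext fun x ↦ (hasDerivAt_Phi x).deriv, interior_Ici]
  exact (strictAntiOn_gaussianPDFReal 0 one_ne_zero).mono Ioi_subset_Ici_self

lemma strictAntiOn_slope_Phi : StrictAntiOn (slope Phi 0) (Ioi 0) := by
  intro x hx y hy hxy
  simp only [slope_def_field]
  exact strictConcaveOn_Phi.secant_strict_mono self_mem_Ici (mem_Ici.2 (le_of_lt hx))
    (mem_Ici.2 (le_of_lt hy)) hx.ne' hy.ne' hxy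

lemma slope_Phi_pos {x : ℝ} (hx : 0 < x) : 0 < slope Phi 0 x := by
  rw [slope_def_field]
  exact div_pos (sub_pos.2 (strictMono_Phi hx)) (sub_pos.2 hx)

lemma tendsto_slope_Phi_zero :
    Tendsto (slope Phi 0) (𝓝[>] 0) (𝓝 (gaussianPDFReal 0 1 0)) :=
  (hasDerivAt_iff_tendsto_slope.1 (hasDerivAt_Phi 0)).mono_left
    (nhdsWithin_mono _ fun _ hx ↦ ne_of_gt hx)

lemma tendsto_atTop_of_tendsto_slope_Phi {α : Type*} {l : Filter α} {u : α → ℝ}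
    (hu : ∀ᶠ a in l, 0 < u a) (h : Tendsto (fun a ↦ slope Phi 0 (u a)) l (𝓝 0)) :
    Tendsto u l atTop := by
  refine tendsto_atTop.2 fun X ↦ ?_
  have hX : 0 < max X 1 := lt_max_of_lt_right one_pos
  filter_upwards [hu, h.eventually (gt_mem_nhds (slope_Phi_pos hX))] with a ha hlt
  exact (le_max_left X 1).trans
    ((strictAntiOn_slope_Phi.lt_iff_gt ha hX).1 hlt).le

def chordPhi (σ ρ : ℝ) : ℝ := (Phi (ρ / σ) - 1 / 2) / ρ

lemma equation_iff_Phi_sub_half_eq (k σ ρ : ℝ) :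
    ρ / (2 * k) - 1 / 2 + Phi (-ρ / σ) = 0 ↔ Phi (ρ / σ) - 1 / 2 = ρ / (2 * k) := by
  rw [neg_div, Phi_neg]
  constructor <;> intro h <;> linarith

lemma equation_iff_chordPhi_eq {k σ ρ : ℝ} (hρ : ρ ≠ 0) :
    ρ / (2 * k) - 1 / 2 + Phi (-ρ / σ) = 0 ↔ chordPhi σ ρ = 1 / (2 * k) := by
  rw [equation_iff_Phi_sub_half_eq, chordPhi, div_eq_iff hρ, one_div_mul_eq_div]

lemma chordPhi_eq_slope (σ ρ : ℝ) : chordPhi σ ρ = slope Phi 0 (ρ / σ) / σ := by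
  rcases eq_or_ne σ 0 with rfl | hσ
  · simp [chordPhi, Phi_zero]
  rcases eq_or_ne ρ 0 with rfl | hρ
  · simp [chordPhi]
  rw [chordPhi, slope_def_field, Phi_zero, sub_zero]
  field_simp

lemma strictAntiOn_chordPhi {σ : ℝ} (hσ : 0 < σ) : StrictAntiOn (chordPhi σ) (Ioi 0) := by
  intro x hx y hy hxy
  simp only [chordPhi_eq_slope]
  exact div_lt_div_of_pos_right (strictAntiOn_slope_Phi (div_pos hx hσ) (div_pos hy hσ)
    (div_lt_div_of_pos_right hxy hσ)) hσ

lemma chordPhi_lt_chordPhi {σ σ' ρ : ℝ} (hσ : 0 < σ) (hρ : 0 < ρ) (h : σ < σ') :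
    chordPhi σ' ρ < chordPhi σ ρ := by
  unfold chordPhi
  gcongr
  exact strictMono_Phi (div_lt_div_of_pos_left hρ hσ h)

lemma continuousOn_chordPhi (σ : ℝ) : ContinuousOn (chordPhi σ) (Ioi 0) := by
  unfold chordPhi
  exact ((continuous_Phi.comp (continuous_id.div_const σ)).sub continuous_const).continuousOn.div
    continuousOn_id fun x hx ↦ ne_of_gt hx

lemma tendsto_chordPhi_zero {σ : ℝ} (hσ : 0 < σ) :
    Tendsto (chordPhi σ) (𝓝[>] 0) (𝓝 (gaussianPDFReal 0 1 0 / σ)) := by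
  have hdiv : Tendsto (· / σ) (𝓝[>] (0 : ℝ)) (𝓝[>] 0) := by
    refine tendsto_nhdsWithin_iff.2 ⟨?_, eventually_mem_nhdsWithin.mono fun x hx ↦ div_pos hx hσ⟩
    simpa using ((continuous_id.div_const σ).tendsto 0).mono_left nhdsWithin_le_nhds
  exact ((tendsto_slope_Phi_zero.comp hdiv).div_const σ).congr fun ρ ↦ (chordPhi_eq_slope σ ρ).symm

lemma exists_chordPhi_eq {k σ : ℝ} (hk : 0 < k) (hσ : 0 < σ) (h : √(Real.pi / 2) < k / σ) :
    ∃ ρ ∈ Ioo 0 k, chordPhi σ ρ = 1 / (2 * k) := by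
  have h_zero : 1 / (2 * k) < gaussianPDFReal 0 1 0 / σ := by
    rw [gaussianPDFReal_zero_one_zero, div_div, one_div_lt_one_div (by positivity) (by positivity)]
    rw [lt_div_iff₀ hσ] at h
    linarith
  have h_k : chordPhi σ k < 1 / (2 * k) :=
    calc chordPhi σ k < (1 / 2) / k := by
          unfold chordPhi; gcongr; linarith [Phi_lt_one (k / σ)]
      _ = 1 / (2 * k) := by ring
  exact isPreconnected_Ioo.intermediate_value_Ioo (le_principal_iff.2 (Ioo_mem_nhdsLT hk))
    (le_principal_iff.2 (Ioo_mem_nhdsGT hk)) ((continuousOn_chordPhi σ).mono Ioo_subset_Ioi_self)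
    (((continuousOn_chordPhi σ).continuousAt (Ioi_mem_nhds hk)).tendsto.mono_left
      nhdsWithin_le_nhds)
    (tendsto_chordPhi_zero hσ) ⟨h_k, h_zero⟩

lemma tendsto_solution_nhdsGT_zero {k : ℝ} (hk : 0 < k) {r : ℝ → ℝ}
    (hr : ∀ σ : ℝ, 0 < σ → √(Real.pi / 2) < k / σ →
      r σ ∈ Ioo 0 k ∧ r σ / (2 * k) - 1 / 2 + Phi (-(r σ) / σ) = 0) :
    Tendsto r (𝓝[>] 0) (𝓝 k) := by
  have hroot : ∀ᶠ σ in 𝓝[>] (0 : ℝ), 0 < r σ / σ ∧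
      slope Phi 0 (r σ / σ) = σ / (2 * k) ∧ 2 * k * (Phi (r σ / σ) - 1 / 2) = r σ := by
    filter_upwards [eventually_mem_nhdsWithin,
      (tendsto_inv_nhdsGT_zero.const_mul_atTop hk).eventually_gt_atTop √(Real.pi / 2)]
      with σ hσ hσk
    obtain ⟨⟨hρ, -⟩, heq⟩ := hr σ hσ hσk
    refine ⟨div_pos hρ hσ, ?_, ?_⟩
    · rw [equation_iff_chordPhi_eq hρ.ne', chordPhi_eq_slope, div_eq_iff hσ.ne'] at heq
      rw [heq]; ring
    · rw [equation_iff_Phi_sub_half_eq] at heq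
      rw [heq]; field_simp
  have hslope : Tendsto (fun σ ↦ slope Phi 0 (r σ / σ)) (𝓝[>] 0) (𝓝 0) := by
    have h := ((continuous_id.div_const (2 * k)).tendsto' 0 0 (zero_div _)).mono_left
      (nhdsWithin_le_nhds (s := Ioi 0))
    exact h.congr' (hroot.mono fun σ hσ ↦ hσ.2.1.symm)
  have hratio := tendsto_atTop_of_tendsto_slope_Phi (hroot.mono fun σ hσ ↦ hσ.1) hslope
  have hlim := ((tendsto_Phi_atTop.comp hratio).sub_const (1 / 2)).const_mul (2 * k)
  rw [show 2 * k * (1 - 1 / 2) = k by ring] at hlim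
  exact hlim.congr' (hroot.mono fun σ hσ ↦ hσ.2.2)

/-- **Lemma (properties of `ρ*`).** For `k, σ > 0` consider the equation
`ρ/(2k) − 1/2 + Φ(−ρ/σ) = 0`. (i) If `k/σ > √(π/2)` there is a unique solution
`ρ* ∈ (0,k)`; (ii) on that region the solution is strictly decreasing in `σ` and tends
to `k` as `σ → 0⁺`; (iii) it is strictly increasing in `k`. -/
theorem rho_star_properties :
    (∀ k σ : ℝ, 0 < k → 0 < σ → Real.sqrt (Real.pi / 2) < k / σ →
      ∃! ρ : ℝ, ρ ∈ Set.Ioo 0 k ∧ ρ / (2 * k) - 1 / 2 + Phi (-ρ / σ) = 0) ∧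
    (∀ k σ σ' ρ ρ' : ℝ, 0 < k → 0 < σ → 0 < σ' →
      Real.sqrt (Real.pi / 2) < k / σ → Real.sqrt (Real.pi / 2) < k / σ' →
      ρ ∈ Set.Ioo 0 k → ρ / (2 * k) - 1 / 2 + Phi (-ρ / σ) = 0 →
      ρ' ∈ Set.Ioo 0 k → ρ' / (2 * k) - 1 / 2 + Phi (-ρ' / σ') = 0 →
      σ < σ' → ρ' < ρ) ∧
    (∀ k : ℝ, 0 < k → ∀ r : ℝ → ℝ,
      (∀ σ : ℝ, 0 < σ → Real.sqrt (Real.pi / 2) < k / σ →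
        r σ ∈ Set.Ioo 0 k ∧ r σ / (2 * k) - 1 / 2 + Phi (-(r σ) / σ) = 0) →
      Filter.Tendsto r (nhdsWithin 0 (Set.Ioi 0)) (nhds k)) ∧
    (∀ k k' σ ρ ρ' : ℝ, 0 < σ → 0 < k → 0 < k' →
      Real.sqrt (Real.pi / 2) < k / σ → Real.sqrt (Real.pi / 2) < k' / σ →
      ρ ∈ Set.Ioo 0 k → ρ / (2 * k) - 1 / 2 + Phi (-ρ / σ) = 0 →
      ρ' ∈ Set.Ioo 0 k' → ρ' / (2 * k') - 1 / 2 + Phi (-ρ' / σ) = 0 →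
      k < k' → ρ < ρ') := by
  refine ⟨fun k σ hk hσ h ↦ ?_, ?_, fun k hk r hr ↦ tendsto_solution_nhdsGT_zero hk hr, ?_⟩
  · obtain ⟨ρ, hρ, heq⟩ := exists_chordPhi_eq hk hσ h
    refine ⟨ρ, ⟨hρ, (equation_iff_chordPhi_eq hρ.1.ne').2 heq⟩, fun ρ' ⟨hρ', heq'⟩ ↦ ?_⟩
    rw [equation_iff_chordPhi_eq hρ'.1.ne', ← heq] at heq'
    exact (strictAntiOn_chordPhi hσ).injOn hρ'.1 hρ.1 heq'
  · intro k σ σ' ρ ρ' _ hσ _ _ _ hρ heq hρ' heq' hσσ'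
    rw [equation_iff_chordPhi_eq hρ.1.ne'] at heq
    rw [equation_iff_chordPhi_eq hρ'.1.ne', ← heq] at heq'
    refine ((strictAntiOn_chordPhi hσ).lt_iff_gt hρ.1 hρ'.1).1 ?_
    rw [← heq']
    exact chordPhi_lt_chordPhi hσ hρ'.1 hσσ'
  · intro k k' σ ρ ρ' hσ hk _ _ _ hρ heq hρ' heq' hkk'
    rw [equation_iff_chordPhi_eq hρ.1.ne'] at heq
    rw [equation_iff_chordPhi_eq hρ'.1.ne'] at heq'
    refine ((strictAntiOn_chordPhi hσ).lt_iff_gt hρ'.1 hρ.1).1 ?_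
    rw [heq, heq']
    gcongr
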